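/- Let Ω be a connected weighted simplicial complex on [n], let a finite group G act on Ω with the action on ℱ̃ free, and let p ∈ 𝒫 be a sum of squares and G-invariant. Then p admits an sos (Ω,G)-decomposition, i.e. sos-rank_{(Ω,G)}(p) < ∞. -/

import Mathlib

namespace PolyDec

open MvPolynomial

attribute [local instance] Classical.propDecidable

noncomputable section

/-! ### Weighted simplicial complexes -/

/-- `Ω` is a weighted simplicial complex on `[n] = {0,…,n}`. -/
def IsWSC {n : ℕ} (Ω : Finset (Fin (n + 1)) → ℕ) : Prop :=
  (∀ S T : Finset (Fin (n + 1)), S ⊆ T → Ω S ∣ Ω T) ∧ ∀ i : Fin (n + 1), Ω {i} ≠ 0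

/-- `F` is a facet of `Ω`: a maximal simplex. -/
def IsFacet {n : ℕ} (Ω : Finset (Fin (n + 1)) → ℕ) (F : Finset (Fin (n + 1))) : Prop :=
  Ω F ≠ 0 ∧ ∀ S : Finset (Fin (n + 1)), Ω S ≠ 0 → F ⊆ S → S = F

/-- `Ω` is connected: any two vertices are joined by a chain of vertices such that
consecutive ones share a facet. -/
def Conn {n : ℕ} (Ω : Finset (Fin (n + 1)) → ℕ) : Prop :=
  ∀ i j : Fin (n + 1),
    Relation.ReflTransGen
      (fun a b => ∃ F : Finset (Fin (n + 1)), IsFacet Ω F ∧ a ∈ F ∧ b ∈ F) i j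

/-- The multiset of facets `ℱ̃`: each facet `F` appears with multiplicity `Ω F`. -/
abbrev MultiFacet {n : ℕ} (Ω : Finset (Fin (n + 1)) → ℕ) : Type :=
  Σ F : {F : Finset (Fin (n + 1)) // IsFacet Ω F}, Fin (Ω F.1)

/-- The sub-multiset `ℱ̃ᵢ` of multifacets containing the vertex `i`. -/
abbrev MFi {n : ℕ} (Ω : Finset (Fin (n + 1)) → ℕ) (i : Fin (n + 1)) : Type :=
  {F : MultiFacet Ω // i ∈ F.1.1}

/-- Restriction `α|ᵢ` of `α : ℱ̃ → I` to `ℱ̃ᵢ`. -/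
def restr {n : ℕ} {Ω : Finset (Fin (n + 1)) → ℕ} {I : Type} (α : MultiFacet Ω → I)
    (i : Fin (n + 1)) : MFi Ω i → I :=
  fun F => α F.1

/-! ### Group actions on a weighted simplicial complex -/

/-- An action of a group `G` on the weighted simplicial complex `Ω`:
an action on the vertices leaving `Ω` invariant, together with a refinement to an action on
the multiset of facets which is compatible with the collapse map. -/
structure GAct {n : ℕ} (Ω : Finset (Fin (n + 1)) → ℕ) (G : Type) [Group G] where
  act : G →* Equiv.Perm (Fin (n + 1))
  omega_inv : ∀ (g : G) (S : Finset (Fin (n + 1))), Ω (S.image (act g)) = Ω S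
  actF : G →* Equiv.Perm (MultiFacet Ω)
  collapse : ∀ (g : G) (F : MultiFacet Ω), (actF g F).1.1 = F.1.1.image (act g)

variable {n : ℕ} {Ω : Finset (Fin (n + 1)) → ℕ} {G : Type} [Group G]

/-- The action is free on `ℱ̃`. -/
def GAct.Free (A : GAct Ω G) : Prop :=
  ∀ (g : G) (F : MultiFacet Ω), A.actF g F = F → g = 1

/-- The action on the vertices is blending. -/
def GAct.Blending (A : GAct Ω G) : Prop :=
  ∀ gs : Fin (n + 1) → G,
    (Function.Surjective fun i => A.act (gs i) i) →
      ∃ g : G, ∀ i, A.act g i = A.act (gs i) i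

theorem GAct.mem_shift (A : GAct Ω G) (g : G) (i : Fin (n + 1)) (F : MFi Ω (A.act g i)) :
    i ∈ (A.actF g⁻¹ F.1).1.1 := by
  rw [A.collapse]
  refine Finset.mem_image.2 ⟨A.act g i, F.2, ?_⟩
  rw [map_inv]
  first
    | exact (A.act g).symm_apply_apply i
    | simp

/-- For `β : ℱ̃ᵢ → I`, the shifted function `ᵍβ : ℱ̃_{g·i} → I`, `(ᵍβ)(F) = β (g⁻¹·F)`. -/
def GAct.shift (A : GAct Ω G) (g : G) (i : Fin (n + 1)) {I : Type} (β : MFi Ω i → I) :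
    MFi Ω (A.act g i) → I :=
  fun F => β ⟨A.actF g⁻¹ F.1, A.mem_shift g i F⟩

/-! ### Polynomial spaces -/

/-- The space `𝒫 = ℝ[x⁽⁰⁾,…,x⁽ⁿ⁾]`, where block `i` has `m i` variables. -/
abbrev PSpace {n : ℕ} (m : Fin (n + 1) → ℕ) : Type :=
  MvPolynomial (Σ i : Fin (n + 1), Fin (m i)) ℝ

/-- The local space `ℝ[x⁽ⁱ⁾]`. -/
abbrev LSpace {n : ℕ} (m : Fin (n + 1) → ℕ) (i : Fin (n + 1)) : Type :=
  MvPolynomial (Fin (m i)) ℝ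

/-- The inclusion `ℝ[x⁽ⁱ⁾] → 𝒫`. -/
def emb {n : ℕ} (m : Fin (n + 1) → ℕ) (i : Fin (n + 1)) : LSpace m i →ₐ[ℝ] PSpace m :=
  rename fun j => (⟨i, j⟩ : Σ i : Fin (n + 1), Fin (m i))

variable {m : Fin (n + 1) → ℕ}

/-- The variable permutation `x⁽ⁱ⁾ ↦ x⁽ᵍ·ⁱ⁾` induced by `g`. -/
def permVar (A : GAct Ω G) (hm : ∀ (g : G) (i : Fin (n + 1)), m (A.act g i) = m i) (g : G) :
    (Σ i : Fin (n + 1), Fin (m i)) → Σ i : Fin (n + 1), Fin (m i) :=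
  fun v => ⟨A.act g v.1, Fin.cast (hm g v.1).symm v.2⟩

/-- `p` is `G`-invariant: `p(x⁽ᵍ⁰⁾,…,x⁽ᵍⁿ⁾) = p(x⁽⁰⁾,…,x⁽ⁿ⁾)` for all `g ∈ G`. -/
def GInvPoly (A : GAct Ω G) (hm : ∀ (g : G) (i : Fin (n + 1)), m (A.act g i) = m i)
    (p : PSpace m) : Prop :=
  ∀ g : G, rename (permVar A hm g) p = p

/-! ### Sums of squares, cones -/

/-- `p` is a sum of squares. -/
def IsSos {σ : Type} (p : MvPolynomial σ ℝ) : Prop :=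
  ∃ (N : ℕ) (q : Fin N → MvPolynomial σ ℝ), p = ∑ k : Fin N, q k ^ 2

/-- `C` is a convex cone. -/
def IsConvexConeSet {V : Type} [AddCommMonoid V] [Module ℝ V] (C : Set V) : Prop :=
  ∀ p ∈ C, ∀ q ∈ C, ∀ a b : ℝ, 0 ≤ a → 0 ≤ b → a • p + b • q ∈ C

/-- The local cones agree along orbits, `C⁽ᵍ·ⁱ⁾ = C⁽ⁱ⁾` (under the renaming identification). -/
def ConeCompat (A : GAct Ω G) (hm : ∀ (g : G) (i : Fin (n + 1)), m (A.act g i) = m i)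
    (C : ∀ i : Fin (n + 1), Set (LSpace m i)) : Prop :=
  ∀ (g : G) (i : Fin (n + 1)) (q : LSpace m (A.act g i)),
    q ∈ C (A.act g i) ↔ rename (Fin.cast (hm g i)) q ∈ C i

/-- The separable cone `C_sep = C⁽⁰⁾ ⊗ ⋯ ⊗ C⁽ⁿ⁾`. -/
def SepCone {n : ℕ} (m : Fin (n + 1) → ℕ) (C : ∀ i : Fin (n + 1), Set (LSpace m i)) :
    Set (PSpace m) :=
  {p | ∃ (r : ℕ) (q : Fin r → ∀ i : Fin (n + 1), LSpace m i),
    (∀ j i, q j i ∈ C i) ∧ p = ∑ j : Fin r, ∏ i : Fin (n + 1), emb m i (q j i)}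

/-! ### Decompositions and ranks -/

/-- `p` has an `Ω`-decomposition with index set of size `r`. -/
def HasODec {n : ℕ} (Ω : Finset (Fin (n + 1)) → ℕ) (m : Fin (n + 1) → ℕ) (p : PSpace m)
    (r : ℕ) : Prop :=
  ∃ q : ∀ i : Fin (n + 1), (MFi Ω i → Fin r) → LSpace m i,
    p = ∑ α : MultiFacet Ω → Fin r, ∏ i : Fin (n + 1), emb m i (q i (restr α i))

/-- The `Ω`-rank of `p` (`⊤` if there is no decomposition). -/
def ORank {n : ℕ} (Ω : Finset (Fin (n + 1)) → ℕ) (m : Fin (n + 1) → ℕ) (p : PSpace m) : ℕ∞ :=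
  ⨅ r : {r : ℕ // HasODec Ω m p r}, (r.1 : ℕ∞)

/-- `p` has an `(Ω,G)`-decomposition with index set of size `r`. -/
def HasOGDec (A : GAct Ω G) (hm : ∀ (g : G) (i : Fin (n + 1)), m (A.act g i) = m i)
    (p : PSpace m) (r : ℕ) : Prop :=
  ∃ q : ∀ i : Fin (n + 1), (MFi Ω i → Fin r) → LSpace m i,
    (p = ∑ α : MultiFacet Ω → Fin r, ∏ i : Fin (n + 1), emb m i (q i (restr α i))) ∧
    ∀ (g : G) (i : Fin (n + 1)) (β : MFi Ω i → Fin r),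
      rename (Fin.cast (hm g i)) (q (A.act g i) (A.shift g i β)) = q i β

/-- The `(Ω,G)`-rank of `p`. -/
def OGRank (A : GAct Ω G) (hm : ∀ (g : G) (i : Fin (n + 1)), m (A.act g i) = m i)
    (p : PSpace m) : ℕ∞ :=
  ⨅ r : {r : ℕ // HasOGDec A hm p r}, (r.1 : ℕ∞)

/-- `p` has a decomposition on the simplex `Σₙ` (a plain tensor decomposition) of size `r`. -/
def HasTDec {n : ℕ} (m : Fin (n + 1) → ℕ) (p : PSpace m) (r : ℕ) : Prop :=
  ∃ q : Fin r → ∀ i : Fin (n + 1), LSpace m i,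
    p = ∑ j : Fin r, ∏ i : Fin (n + 1), emb m i (q j i)

/-- The tensor rank `rank_{Σₙ}(p)`. -/
def TRank {n : ℕ} (m : Fin (n + 1) → ℕ) (p : PSpace m) : ℕ∞ :=
  ⨅ r : {r : ℕ // HasTDec m p r}, (r.1 : ℕ∞)

/-- Separable `Ω`-decomposition w.r.t. the local cones `C`. -/
def HasSepODec {n : ℕ} (Ω : Finset (Fin (n + 1)) → ℕ) (m : Fin (n + 1) → ℕ)
    (C : ∀ i : Fin (n + 1), Set (LSpace m i)) (p : PSpace m) (r : ℕ) : Prop :=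
  ∃ q : ∀ i : Fin (n + 1), (MFi Ω i → Fin r) → LSpace m i,
    (p = ∑ α : MultiFacet Ω → Fin r, ∏ i : Fin (n + 1), emb m i (q i (restr α i))) ∧
    ∀ i β, q i β ∈ C i

/-- The separable `Ω`-rank. -/
def SepORank {n : ℕ} (Ω : Finset (Fin (n + 1)) → ℕ) (m : Fin (n + 1) → ℕ)
    (C : ∀ i : Fin (n + 1), Set (LSpace m i)) (p : PSpace m) : ℕ∞ :=
  ⨅ r : {r : ℕ // HasSepODec Ω m C p r}, (r.1 : ℕ∞)

/-- Separable `(Ω,G)`-decomposition w.r.t. the local cones `C`. -/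
def HasSepOGDec (A : GAct Ω G) (hm : ∀ (g : G) (i : Fin (n + 1)), m (A.act g i) = m i)
    (C : ∀ i : Fin (n + 1), Set (LSpace m i)) (p : PSpace m) (r : ℕ) : Prop :=
  ∃ q : ∀ i : Fin (n + 1), (MFi Ω i → Fin r) → LSpace m i,
    (p = ∑ α : MultiFacet Ω → Fin r, ∏ i : Fin (n + 1), emb m i (q i (restr α i))) ∧
    (∀ (g : G) (i : Fin (n + 1)) (β : MFi Ω i → Fin r),
      rename (Fin.cast (hm g i)) (q (A.act g i) (A.shift g i β)) = q i β) ∧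
    ∀ i β, q i β ∈ C i

/-- The separable `(Ω,G)`-rank. -/
def SepOGRank (A : GAct Ω G) (hm : ∀ (g : G) (i : Fin (n + 1)), m (A.act g i) = m i)
    (C : ∀ i : Fin (n + 1), Set (LSpace m i)) (p : PSpace m) : ℕ∞ :=
  ⨅ r : {r : ℕ // HasSepOGDec A hm C p r}, (r.1 : ℕ∞)

/-- Separable decomposition on the simplex `Σₙ`. -/
def HasSepTDec {n : ℕ} (m : Fin (n + 1) → ℕ) (C : ∀ i : Fin (n + 1), Set (LSpace m i))
    (p : PSpace m) (r : ℕ) : Prop :=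
  ∃ q : Fin r → ∀ i : Fin (n + 1), LSpace m i,
    (∀ j i, q j i ∈ C i) ∧ p = ∑ j : Fin r, ∏ i : Fin (n + 1), emb m i (q j i)

/-- The separable rank on the simplex. -/
def SepTRank {n : ℕ} (m : Fin (n + 1) → ℕ) (C : ∀ i : Fin (n + 1), Set (LSpace m i))
    (p : PSpace m) : ℕ∞ :=
  ⨅ r : {r : ℕ // HasSepTDec m C p r}, (r.1 : ℕ∞)

/-- `p` has a sum-of-squares `(Ω,G)`-decomposition of size `r`: a `G`-invariant family
`𝔮 = (q_k)` with `p = ∑ q_k²` together with an `(Ω,G)`-decomposition of the family. -/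
def HasSosOGDec (A : GAct Ω G) (hm : ∀ (g : G) (i : Fin (n + 1)), m (A.act g i) = m i)
    (p : PSpace m) (r : ℕ) : Prop :=
  ∃ (s : Fin (n + 1) → ℕ) (hs : ∀ (g : G) (i : Fin (n + 1)), s (A.act g i) = s i)
    (q : ∀ i : Fin (n + 1), Fin (s i) → (MFi Ω i → Fin r) → LSpace m i),
    (p = ∑ k : ∀ i : Fin (n + 1), Fin (s i),
        (∑ α : MultiFacet Ω → Fin r, ∏ i : Fin (n + 1), emb m i (q i (k i) (restr α i))) ^ 2) ∧
    ∀ (g : G) (i : Fin (n + 1)) (kk : Fin (s i)) (β : MFi Ω i → Fin r),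
      rename (Fin.cast (hm g i))
        (q (A.act g i) (Fin.cast (hs g i).symm kk) (A.shift g i β)) = q i kk β

/-- The sos `(Ω,G)`-rank. -/
def SosOGRank (A : GAct Ω G) (hm : ∀ (g : G) (i : Fin (n + 1)), m (A.act g i) = m i)
    (p : PSpace m) : ℕ∞ :=
  ⨅ r : {r : ℕ // HasSosOGDec A hm p r}, (r.1 : ℕ∞)

/-! ### Local degree -/

/-- Every monomial of `p` has degree at most `d` in each block of variables. -/
def locDegLE {n : ℕ} (m : Fin (n + 1) → ℕ) (p : PSpace m) (d : ℕ) : Prop :=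
  ∀ s ∈ p.support, ∀ i : Fin (n + 1), (∑ j : Fin (m i), s ⟨i, j⟩) ≤ d

/-- The local degree of `p`. -/
def locDeg {n : ℕ} (m : Fin (n + 1) → ℕ) (p : PSpace m) : ℕ :=
  sInf {d : ℕ | locDegLE m p d}

/-! ### Tensor decompositions -/

/-- `(Ω,G)`-decomposition of a tensor `T ∈ ℝ^mv ⊗ ⋯ ⊗ ℝ^mv`. -/
def HasTOGDec (A : GAct Ω G) (mv : ℕ) (T : (Fin (n + 1) → Fin mv) → ℝ) (r : ℕ) : Prop :=
  ∃ v : ∀ i : Fin (n + 1), (MFi Ω i → Fin r) → Fin mv → ℝ,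
    (∀ jf : Fin (n + 1) → Fin mv,
      T jf = ∑ α : MultiFacet Ω → Fin r, ∏ i : Fin (n + 1), v i (restr α i) (jf i)) ∧
    ∀ (g : G) (i : Fin (n + 1)) (β : MFi Ω i → Fin r), v (A.act g i) (A.shift g i β) = v i β

/-- The `(Ω,G)`-rank of a tensor. -/
def TOGRank (A : GAct Ω G) (mv : ℕ) (T : (Fin (n + 1) → Fin mv) → ℝ) : ℕ∞ :=
  ⨅ r : {r : ℕ // HasTOGDec A mv T r}, (r.1 : ℕ∞)

/-- Nonnegative `(Ω,G)`-decomposition of a tensor. -/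
def HasNNTOGDec (A : GAct Ω G) (mv : ℕ) (T : (Fin (n + 1) → Fin mv) → ℝ) (r : ℕ) : Prop :=
  ∃ v : ∀ i : Fin (n + 1), (MFi Ω i → Fin r) → Fin mv → ℝ,
    (∀ jf : Fin (n + 1) → Fin mv,
      T jf = ∑ α : MultiFacet Ω → Fin r, ∏ i : Fin (n + 1), v i (restr α i) (jf i)) ∧
    (∀ (g : G) (i : Fin (n + 1)) (β : MFi Ω i → Fin r), v (A.act g i) (A.shift g i β) = v i β) ∧
    ∀ i β j, 0 ≤ v i β j

/-- The nonnegative `(Ω,G)`-rank of a tensor. -/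
def NNTOGRank (A : GAct Ω G) (mv : ℕ) (T : (Fin (n + 1) → Fin mv) → ℝ) : ℕ∞ :=
  ⨅ r : {r : ℕ // HasNNTOGDec A mv T r}, (r.1 : ℕ∞)

/-- Positive semidefinite `(Ω,G)`-decomposition of a tensor. -/
def HasPsdTOGDec (A : GAct Ω G) (mv : ℕ) (T : (Fin (n + 1) → Fin mv) → ℝ) (r : ℕ) : Prop :=
  ∃ E : ∀ i : Fin (n + 1), Fin mv → Matrix (MFi Ω i → Fin r) (MFi Ω i → Fin r) ℝ,
    (∀ i j, (E i j).PosSemidef) ∧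
    (∀ (g : G) (i : Fin (n + 1)) (j : Fin mv) (β β' : MFi Ω i → Fin r),
      E (A.act g i) j (A.shift g i β) (A.shift g i β') = E i j β β') ∧
    ∀ jf : Fin (n + 1) → Fin mv,
      T jf = ∑ α : MultiFacet Ω → Fin r, ∑ α' : MultiFacet Ω → Fin r,
        ∏ i : Fin (n + 1), E i (jf i) (restr α i) (restr α' i)

/-- The positive semidefinite `(Ω,G)`-rank of a tensor. -/
def PsdTOGRank (A : GAct Ω G) (mv : ℕ) (T : (Fin (n + 1) → Fin mv) → ℝ) : ℕ∞ :=
  ⨅ r : {r : ℕ // HasPsdTOGDec A mv T r}, (r.1 : ℕ∞)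

/-- The polynomial `p_T = ∑ T_{j₀…jₙ} (x⁽⁰⁾_{j₀})² ⋯ (x⁽ⁿ⁾_{jₙ})²` associated to a tensor. -/
def pT {n : ℕ} (mv : ℕ) (T : (Fin (n + 1) → Fin mv) → ℝ) :
    PSpace (fun _ : Fin (n + 1) => mv) :=
  ∑ jf : Fin (n + 1) → Fin mv, MvPolynomial.C (T jf) *
    ∏ i : Fin (n + 1), X (⟨i, jf i⟩ : Σ _ : Fin (n + 1), Fin mv) ^ 2

/-! ### The Gram map -/

/-- Exponent vectors of monomials of degree at most `d` in `mv` variables. -/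
abbrev Mon (mv d : ℕ) : Type := {k : Fin mv → Fin (d + 1) // (∑ j : Fin mv, (k j).val) ≤ d}

/-- The monomial at site `i` with exponent vector `k`. -/
def monAt {n : ℕ} {mv d : ℕ} (i : Fin (n + 1)) (k : Mon mv d) :
    PSpace (fun _ : Fin (n + 1) => mv) :=
  ∏ j : Fin mv, X (⟨i, j⟩ : Σ _ : Fin (n + 1), Fin mv) ^ (k.1 j).val

/-- The Gram map `𝒢(M) = 𝔪ᵗ M 𝔪`. -/
def gram {n : ℕ} {mv d : ℕ}
    (M : Matrix (Fin (n + 1) → Mon mv d) (Fin (n + 1) → Mon mv d) ℝ) :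
    PSpace (fun _ : Fin (n + 1) => mv) :=
  ∑ k : Fin (n + 1) → Mon mv d, ∑ k' : Fin (n + 1) → Mon mv d,
    M k k' • ∏ i : Fin (n + 1), (monAt i (k i) * monAt i (k' i))

/-! ### Homogeneous Gram map, norms -/

/-- Exponent vectors of monomials of degree exactly `d` in `mv + 1` variables. -/
abbrev MonH (mv d : ℕ) : Type :=
  {k : Fin (mv + 1) → Fin (d + 1) // (∑ j : Fin (mv + 1), (k j).val) = d}

/-- The homogeneous monomial at site `i` with exponent vector `k`. -/
def monHAt {n : ℕ} {mv d : ℕ} (i : Fin (n + 1)) (k : MonH mv d) :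
    PSpace (fun _ : Fin (n + 1) => mv + 1) :=
  ∏ j : Fin (mv + 1), X (⟨i, j⟩ : Σ _ : Fin (n + 1), Fin (mv + 1)) ^ (k.1 j).val

/-- The Gram map in the homogeneous setting. -/
def gramH {n : ℕ} {mv d : ℕ}
    (M : Matrix (Fin (n + 1) → MonH mv d) (Fin (n + 1) → MonH mv d) ℝ) :
    PSpace (fun _ : Fin (n + 1) => mv + 1) :=
  ∑ k : Fin (n + 1) → MonH mv d, ∑ k' : Fin (n + 1) → MonH mv d,
    M k k' • ∏ i : Fin (n + 1), (monHAt i (k i) * monHAt i (k' i))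

/-- The largest singular value (ℓ²-operator norm) of a real square matrix. -/
def sigmaMax {ι : Type} [Fintype ι] (M : Matrix ι ι ℝ) : ℝ :=
  sSup {r : ℝ | ∃ y : ι → ℝ, (∑ t, y t ^ 2) ≤ 1 ∧ r = Real.sqrt (∑ t, (M.mulVec y t) ^ 2)}

/-- The supremum norm of `p` on `𝕊 = 𝕊^m × ⋯ × 𝕊^m`. -/
def InfNormH {n mv : ℕ} (p : PSpace (fun _ : Fin (n + 1) => mv + 1)) : ℝ :=
  sSup {r : ℝ | ∃ a : Fin (n + 1) → Fin (mv + 1) → ℝ,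
    (∀ i, ∑ j, a i j ^ 2 = 1) ∧
    r = |MvPolynomial.eval (fun v : Σ _ : Fin (n + 1), Fin (mv + 1) => a v.1 v.2) p|}

/-- `p` is homogeneous of degree `d` in each block of variables separately. -/
def MultiHomog {n : ℕ} (m : Fin (n + 1) → ℕ) (d : ℕ) (p : PSpace m) : Prop :=
  ∀ s ∈ p.support, ∀ i : Fin (n + 1), (∑ j : Fin (m i), s ⟨i, j⟩) = d

/-- `M` is a separable matrix: a sum of elementary tensors of psd matrices. -/
def SepGram {n : ℕ} {mv d : ℕ}
    (M : Matrix (Fin (n + 1) → MonH mv d) (Fin (n + 1) → MonH mv d) ℝ) : Prop :=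
  ∃ (N : ℕ) (Ms : Fin N → ∀ _ : Fin (n + 1), Matrix (MonH mv d) (MonH mv d) ℝ),
    (∀ j i, (Ms j i).PosSemidef) ∧
    ∀ k k', M k k' = ∑ j : Fin N, ∏ i : Fin (n + 1), Ms j i (k i) (k' i)

/-- `μ(p)`: the smallest `λ > 0` such that `p = λ·𝒢(M)` for some `G`-invariant
subnormalized separable matrix `M`. -/
def muP {n : ℕ} {Ω : Finset (Fin (n + 1)) → ℕ} {G : Type} [Group G] (mv d : ℕ) (A : GAct Ω G)
    (p : PSpace (fun _ : Fin (n + 1) => mv + 1)) : ℝ :=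
  sInf {l : ℝ | 0 < l ∧
    ∃ M : Matrix (Fin (n + 1) → MonH mv d) (Fin (n + 1) → MonH mv d) ℝ,
      SepGram M ∧ (∑ k, M k k) ≤ 1 ∧
      (∀ (g : G) (k k' : Fin (n + 1) → MonH mv d),
        M (fun i => k (A.act g i)) (fun i => k' (A.act g i)) = M k k') ∧
      p = l • gramH M}

/-! ### Factorizability -/

/-- `(Ω,G)` is factorizable. -/
def Factorizable (A : GAct Ω G) : Prop :=
  ∀ N : ℕ, ∃ Cf : ∀ i : Fin (n + 1), (MFi Ω i → Fin N) → ℝ,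
    (∀ i β, 0 < Cf i β) ∧
    (∀ (g : G) (i : Fin (n + 1)) (β : MFi Ω i → Fin N),
      Cf (A.act g i) (A.shift g i β) = Cf i β) ∧
    ∀ α : MultiFacet Ω → Fin N,
      (∏ i : Fin (n + 1), Cf i (restr α i)) =
        ((Fintype.card {γ : MultiFacet Ω → Fin N //
          ∃ gs : Fin (n + 1) → G, ∀ i : Fin (n + 1), A.act (gs i) i = i ∧
            ∀ F : MFi Ω i, γ (A.actF (gs i)⁻¹ F.1) = α F.1} : ℕ) : ℝ)⁻¹

/-! ### Two-block (single edge `Λ₁`) ranks -/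

/-- The single-edge rank of a two-block polynomial. -/
def rank1 {mv : ℕ} (p : MvPolynomial (Fin mv ⊕ Fin mv) ℝ) : ℕ∞ :=
  ⨅ r : {r : ℕ // ∃ f g : Fin r → MvPolynomial (Fin mv) ℝ,
    p = ∑ α : Fin r, rename Sum.inl (f α) * rename Sum.inr (g α)}, (r.1 : ℕ∞)

/-- The single-edge separable rank (w.r.t. the local sos cones). -/
def sep1 {mv : ℕ} (p : MvPolynomial (Fin mv ⊕ Fin mv) ℝ) : ℕ∞ :=
  ⨅ r : {r : ℕ // ∃ f g : Fin r → MvPolynomial (Fin mv) ℝ,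
    (∀ α, IsSos (f α) ∧ IsSos (g α)) ∧
    p = ∑ α : Fin r, rename Sum.inl (f α) * rename Sum.inr (g α)}, (r.1 : ℕ∞)

/-- The single-edge sos rank. -/
def sos1 {mv : ℕ} (p : MvPolynomial (Fin mv ⊕ Fin mv) ℝ) : ℕ∞ :=
  ⨅ r : {r : ℕ // ∃ (s₀ s₁ : ℕ) (a : Fin s₀ → Fin r → MvPolynomial (Fin mv) ℝ)
    (b : Fin s₁ → Fin r → MvPolynomial (Fin mv) ℝ),
    p = ∑ k : Fin s₀, ∑ l : Fin s₁,
      (∑ α : Fin r, rename Sum.inl (a k α) * rename Sum.inr (b l α)) ^ 2}, (r.1 : ℕ∞)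

/-- The Euclidean-distance-matrix polynomial `p_m = ∑ (i-j)² xᵢ² yⱼ²`. -/
def pm (mv : ℕ) : MvPolynomial (Fin mv ⊕ Fin mv) ℝ :=
  ∑ i : Fin mv, ∑ j : Fin mv,
    MvPolynomial.C (((i : ℕ) : ℝ) - ((j : ℕ) : ℝ)) ^ 2 *
      (X (Sum.inl i) ^ 2 * X (Sum.inr j) ^ 2)


/-- Constant block sizes are trivially compatible with any group action. -/
theorem constCompat {n : ℕ} {Ω : Finset (Fin (n + 1)) → ℕ} {G : Type} [Group G]
    (A : GAct Ω G) (mv : ℕ) :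
    ∀ (g : G) (i : Fin (n + 1)),
      (fun _ : Fin (n + 1) => mv) (A.act g i) = (fun _ : Fin (n + 1) => mv) i :=
  fun _ _ => rfl
section Statement10Aux

variable {n : ℕ} {Ω : Finset (Fin (n + 1)) → ℕ} {G : Type} [Group G]

/-! ### Basic facet lemmas -/

lemma exists_facet_mem (hΩ : IsWSC Ω) (i : Fin (n + 1)) :
    ∃ F : Finset (Fin (n + 1)), IsFacet Ω F ∧ i ∈ F := by
  classical
  have hne : (Finset.univ.powerset.filter (fun S => Ω S ≠ 0 ∧ i ∈ S)).Nonempty := by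
    refine ⟨{i}, ?_⟩
    simp only [Finset.mem_filter, Finset.mem_powerset, Finset.subset_univ, true_and]
    exact ⟨hΩ.2 i, Finset.mem_singleton_self i⟩
  obtain ⟨F, hF, hmax⟩ := Finset.exists_max_image _ Finset.card hne
  rw [Finset.mem_filter] at hF
  refine ⟨F, ⟨hF.2.1, ?_⟩, hF.2.2⟩
  intro S hS hFS
  have hSmem : S ∈ Finset.univ.powerset.filter (fun S => Ω S ≠ 0 ∧ i ∈ S) := by
    rw [Finset.mem_filter]
    exact ⟨by simp, hS, hFS hF.2.2⟩
  exact (Finset.eq_of_subset_of_card_le hFS (hmax S hSmem)).symm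

lemma facet_nonempty (hΩ : IsWSC Ω) {F : Finset (Fin (n + 1))} (hF : IsFacet Ω F) :
    F.Nonempty := by
  rcases Finset.eq_empty_or_nonempty F with h | h
  · subst h
    have h0 := hF.2 {0} (hΩ.2 0) (Finset.empty_subset _)
    exact absurd h0 (Finset.singleton_ne_empty 0)
  · exact h

lemma mfi_nonempty (hΩ : IsWSC Ω) (i : Fin (n + 1)) : Nonempty (MFi Ω i) := by
  obtain ⟨F, hF, hi⟩ := exists_facet_mem hΩ i
  exact ⟨⟨⟨⟨F, hF⟩, ⟨0, Nat.pos_of_ne_zero hF.1⟩⟩, hi⟩⟩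

lemma mf_nonempty (hΩ : IsWSC Ω) : Nonempty (MultiFacet Ω) :=
  ⟨((mfi_nonempty hΩ 0).some : MFi Ω 0).1⟩

/-! ### Action lemmas -/

lemma act_mul_apply (A : GAct Ω G) (a b : G) (i : Fin (n + 1)) :
    A.act (a * b) i = A.act a (A.act b i) := by rw [map_mul]; rfl

lemma act_inv_apply (A : GAct Ω G) (a : G) (i : Fin (n + 1)) :
    A.act a⁻¹ (A.act a i) = i := by
  rw [← act_mul_apply, inv_mul_cancel, map_one]; rfl

lemma act_apply_inv (A : GAct Ω G) (a : G) (i : Fin (n + 1)) :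
    A.act a (A.act a⁻¹ i) = i := by
  rw [← act_mul_apply, mul_inv_cancel, map_one]; rfl

lemma actF_mul_apply (A : GAct Ω G) (a b : G) (F : MultiFacet Ω) :
    A.actF (a * b) F = A.actF a (A.actF b F) := by rw [map_mul]; rfl

lemma actF_inv_apply (A : GAct Ω G) (a : G) (F : MultiFacet Ω) :
    A.actF a⁻¹ (A.actF a F) = F := by
  rw [← actF_mul_apply, inv_mul_cancel, map_one]; rfl

/-! ### Variable permutation lemmas -/

lemma sigma_fin_ext {m : Fin (n + 1) → ℕ} {a b : Fin (n + 1)} (hab : a = b)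
    {x : Fin (m a)} {y : Fin (m b)} (hxy : (x : ℕ) = (y : ℕ)) :
    (⟨a, x⟩ : Σ j, Fin (m j)) = ⟨b, y⟩ := by
  subst hab
  exact congrArg (Sigma.mk a) (Fin.ext hxy)

lemma permVar_congr (A : GAct Ω G) {m : Fin (n + 1) → ℕ}
    (hm : ∀ (g : G) (i : Fin (n + 1)), m (A.act g i) = m i) {g g' : G}
    (hgg' : ∀ i, A.act g i = A.act g' i) : permVar A hm g = permVar A hm g' := by
  funext v
  exact sigma_fin_ext (hgg' v.1) rfl

lemma permVar_mul (A : GAct Ω G) {m : Fin (n + 1) → ℕ}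
    (hm : ∀ (g : G) (i : Fin (n + 1)), m (A.act g i) = m i) (g g' : G)
    (v : Σ j, Fin (m j)) :
    permVar A hm g (permVar A hm g' v) = permVar A hm (g * g') v :=
  sigma_fin_ext (act_mul_apply A g g' v.1).symm rfl

/-! ### Local projection -/

def projB {m : Fin (n + 1) → ℕ} (i : Fin (n + 1)) : PSpace m →ₐ[ℝ] LSpace m i :=
  aeval (fun v : Σ j, Fin (m j) =>
    if h : v.1 = i then X (Fin.cast (congrArg m h) v.2) else 1)

lemma projB_rename (A : GAct Ω G) {m : Fin (n + 1) → ℕ}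
    (hm : ∀ (g : G) (i : Fin (n + 1)), m (A.act g i) = m i) (g : G) (i : Fin (n + 1))
    (P : PSpace m) :
    rename (Fin.cast (hm g i)) (projB (A.act g i) (rename (permVar A hm g) P)) = projB i P := by
  have hcomp : ((rename (Fin.cast (hm g i)) : LSpace m (A.act g i) →ₐ[ℝ] LSpace m i).comp
      ((projB (m := m) (A.act g i)).comp
        (rename (permVar A hm g) : PSpace m →ₐ[ℝ] PSpace m))) = projB (m := m) i := by
    apply MvPolynomial.algHom_ext
    intro v
    simp only [AlgHom.comp_apply, rename_X]
    show rename (Fin.cast (hm g i)) ((aeval _) (X (permVar A hm g v))) = (aeval _) (X v)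
    rw [aeval_X, aeval_X]
    by_cases hv : v.1 = i
    · have h1 : (permVar A hm g v).1 = A.act g i := by
        show A.act g v.1 = A.act g i
        rw [hv]
      rw [dif_pos h1, dif_pos hv, rename_X]
      exact congrArg X (Fin.ext rfl)
    · have h1 : ¬ ((permVar A hm g v).1 = A.act g i) := by
        intro hcon
        exact hv ((A.act g).injective hcon)
      rw [dif_neg h1, dif_neg hv, map_one]
  exact DFunLike.congr_fun hcomp P

lemma embProj {m : Fin (n + 1) → ℕ} (i : Fin (n + 1)) (P : PSpace m) :
    emb m i (projB i P) =
      aeval (fun v : Σ j, Fin (m j) => if v.1 = i then (X v : PSpace m) else 1) P := by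
  have hcomp : (emb m i).comp (projB (m := m) i) =
      aeval (fun v : Σ j, Fin (m j) => if v.1 = i then (X v : PSpace m) else 1) := by
    apply MvPolynomial.algHom_ext
    intro v
    simp only [AlgHom.comp_apply, aeval_X]
    show emb m i ((aeval _) (X v)) = _
    rw [aeval_X]
    by_cases hv : v.1 = i
    · rw [dif_pos hv, if_pos hv]
      show rename _ (X _) = _
      rw [rename_X]
      exact congrArg X (sigma_fin_ext hv.symm rfl)
    · rw [dif_neg hv, if_neg hv, map_one]
  exact DFunLike.congr_fun hcomp P

lemma fact_monomial {m : Fin (n + 1) → ℕ} (d : (Σ j, Fin (m j)) →₀ ℕ) :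
    (∏ i : Fin (n + 1), emb m i (projB i (monomial d (1 : ℝ)))) = monomial d 1 := by
  have hmono : (monomial d (1 : ℝ) : PSpace m) = ∏ v ∈ d.support, (X v : PSpace m) ^ d v := by
    rw [monomial_eq, C_1, one_mul]
    rfl
  calc ∏ i : Fin (n + 1), emb m i (projB i (monomial d (1 : ℝ)))
      = ∏ i : Fin (n + 1), ∏ v ∈ d.support,
          (if v.1 = i then (X v : PSpace m) else 1) ^ d v := by
        refine Finset.prod_congr rfl fun i _ => ?_
        rw [embProj, hmono, map_prod]
        refine Finset.prod_congr rfl fun v _ => ?_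
        rw [map_pow, aeval_X]
    _ = ∏ v ∈ d.support, ∏ i : Fin (n + 1),
          (if v.1 = i then (X v : PSpace m) else 1) ^ d v := Finset.prod_comm
    _ = ∏ v ∈ d.support, (X v : PSpace m) ^ d v := by
        refine Finset.prod_congr rfl fun v _ => ?_
        have h1 : ∀ i : Fin (n + 1), (if v.1 = i then (X v : PSpace m) else 1) ^ d v
            = (if v.1 = i then (X v : PSpace m) ^ d v else 1) := by
          intro i
          split <;> simp
        rw [Finset.prod_congr rfl fun i _ => h1 i, Finset.prod_ite_eq]
        simp
    _ = monomial d 1 := hmono.symm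

end Statement10Aux

section Statement10Aux2

variable {n : ℕ} {Ω : Finset (Fin (n + 1)) → ℕ} {G : Type} [Group G]

/-! ### Orbit sections for the free action on multifacets -/

def orbSetoid (A : GAct Ω G) : Setoid (MultiFacet Ω) where
  r F F' := ∃ g : G, A.actF g F = F'
  iseqv := by
    constructor
    · intro F
      exact ⟨1, by rw [map_one]; rfl⟩
    · rintro F F' ⟨g, rfl⟩
      exact ⟨g⁻¹, actF_inv_apply A g F⟩
    · rintro F F' F'' ⟨g, rfl⟩ ⟨g', rfl⟩
      exact ⟨g' * g, actF_mul_apply A g' g F⟩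

def repF (A : GAct Ω G) (F : MultiFacet Ω) : MultiFacet Ω :=
  (Quotient.mk (orbSetoid A) F).out

lemma repF_exists (A : GAct Ω G) (F : MultiFacet Ω) : ∃ g : G, A.actF g (repF A F) = F :=
  Quotient.mk_out (s := orbSetoid A) F

lemma repF_act (A : GAct Ω G) (g : G) (F : MultiFacet Ω) :
    repF A (A.actF g F) = repF A F :=
  congrArg Quotient.out (Quotient.sound (⟨g, rfl⟩ : (orbSetoid A).r F (A.actF g F))).symm

def gammaF (A : GAct Ω G) (F : MultiFacet Ω) : G := (repF_exists A F).choose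

lemma gammaF_spec (A : GAct Ω G) (F : MultiFacet Ω) :
    A.actF (gammaF A F) (repF A F) = F :=
  (repF_exists A F).choose_spec

lemma free_cancel {A : GAct Ω G} (hfree : A.Free) {a b : G} {F : MultiFacet Ω}
    (hab : A.actF a F = A.actF b F) : a = b := by
  have h1 : A.actF (b⁻¹ * a) F = F := by
    rw [actF_mul_apply, hab]
    exact actF_inv_apply A b F
  exact (inv_mul_eq_one.mp (hfree _ _ h1)).symm

lemma gammaF_mul {A : GAct Ω G} (hfree : A.Free) (g : G) (F : MultiFacet Ω) :
    gammaF A (A.actF g F) = g * gammaF A F := by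
  apply free_cancel hfree (F := repF A F)
  rw [actF_mul_apply, gammaF_spec]
  have h1 := gammaF_spec A (A.actF g F)
  rw [repF_act] at h1
  exact h1

/-! ### The construction -/

variable [Fintype G]

def DsupD {m : Fin (n + 1) → ℕ} (N : ℕ) (hh : Fin N → PSpace m) :
    Finset ((Σ j, Fin (m j)) →₀ ℕ) :=
  Finset.univ.biUnion fun t : Fin N => (hh t).support

abbrev DsubD {m : Fin (n + 1) → ℕ} (N : ℕ) (hh : Fin N → PSpace m) : Type :=
  {d : (Σ j, Fin (m j)) →₀ ℕ // d ∈ DsupD N hh}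

instance {m : Fin (n + 1) → ℕ} (N : ℕ) (hh : Fin N → PSpace m) :
    Fintype (DsubD N hh) := FinsetCoe.fintype _

abbrev IdxI (G : Type) [Group G] [Fintype G] {m : Fin (n + 1) → ℕ} (N : ℕ)
    (hh : Fin N → PSpace m) : Type :=
  (Fin N × G) × DsubD N hh

abbrev rI (G : Type) [Group G] [Fintype G] {m : Fin (n + 1) → ℕ} (N : ℕ)
    (hh : Fin N → PSpace m) : ℕ :=
  Fintype.card (IdxI G N hh)

noncomputable def eIdx (G : Type) [Group G] [Fintype G] {m : Fin (n + 1) → ℕ} (N : ℕ)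
    (hh : Fin N → PSpace m) : IdxI G N hh ≃ Fin (rI G N hh) :=
  Fintype.equivFin _

noncomputable def BB (A : GAct Ω G) {m : Fin (n + 1) → ℕ} (N : ℕ) (hh : Fin N → PSpace m)
    (c : IdxI G N hh) : MultiFacet Ω → Fin (rI G N hh) :=
  fun F => eIdx G N hh ((c.1.1, (gammaF A F)⁻¹ * c.1.2), c.2)

def nKc (A : GAct Ω G) (g : G) : ℕ :=
  (Finset.univ.filter fun g₁ : G => ∀ i, A.act g₁ i = A.act g i).card

lemma nKc_pos (A : GAct Ω G) (g : G) : 0 < nKc A g :=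
  Finset.card_pos.2 ⟨g, by simp⟩

lemma nKc_congr (A : GAct Ω G) {g g' : G} (hgg' : ∀ i, A.act g i = A.act g' i) :
    nKc A g = nKc A g' := by
  unfold nKc
  congr 1
  apply Finset.filter_congr
  intro x _
  exact ⟨fun hx i => (hx i).trans (hgg' i), fun hx i => (hx i).trans (hgg' i).symm⟩

lemma nKc_mul_left (A : GAct Ω G) (g g₁ : G) : nKc A (g * g₁) = nKc A g₁ := by
  unfold nKc
  apply Finset.card_bij (fun (x : G) _ => g⁻¹ * x)
  · intro a ha
    simp only [Finset.mem_filter, Finset.mem_univ, true_and] at ha ⊢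
    intro i
    rw [act_mul_apply, ha i, act_mul_apply, act_inv_apply]
  · intro a ha b hb hab
    exact mul_left_cancel hab
  · intro b hb
    simp only [Finset.mem_filter, Finset.mem_univ, true_and] at hb ⊢
    refine ⟨g * b, fun i => ?_, by rw [inv_mul_cancel_left]⟩
    rw [act_mul_apply, hb i, ← act_mul_apply]

noncomputable def WcD (A : GAct Ω G) {m : Fin (n + 1) → ℕ} (N : ℕ) (hh : Fin N → PSpace m)
    (c : IdxI G N hh) : ℝ :=
  Real.sqrt (((Fintype.card G : ℝ) * (nKc A c.1.2 : ℝ))⁻¹) * coeff c.2.1 (hh c.1.1)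

noncomputable def locP (A : GAct Ω G) {m : Fin (n + 1) → ℕ}
    (hm : ∀ (g : G) (i : Fin (n + 1)), m (A.act g i) = m i) (N : ℕ) (hh : Fin N → PSpace m)
    (c : IdxI G N hh) (i : Fin (n + 1)) : LSpace m i :=
  (if A.act c.1.2⁻¹ i = 0 then WcD A N hh c else 1) •
    projB i (rename (permVar A hm c.1.2) (monomial c.2.1 1))

def eKD (n N : ℕ) : Fin (N * (n + 1)) ≃ Fin N × Fin (n + 1) := finProdFinEquiv.symm

noncomputable def qD (A : GAct Ω G) {m : Fin (n + 1) → ℕ}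
    (hm : ∀ (g : G) (i : Fin (n + 1)), m (A.act g i) = m i) (N : ℕ) (hh : Fin N → PSpace m)
    (i : Fin (n + 1)) (kk : Fin (N * (n + 1))) (β : MFi Ω i → Fin (rI G N hh)) :
    LSpace m i :=
  ∑ c : IdxI G N hh,
    if restr (BB A N hh c) i = β ∧ eKD n N kk = (c.1.1, A.act c.1.2⁻¹ i)
    then locP A hm N hh c i else 0

noncomputable def kmapD (A : GAct Ω G) (N : ℕ) (z : Fin N × G) :
    Fin (n + 1) → Fin (N * (n + 1)) :=
  fun i => (eKD n N).symm (z.1, A.act z.2⁻¹ i)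

noncomputable def uD (A : GAct Ω G) {m : Fin (n + 1) → ℕ}
    (hm : ∀ (g : G) (i : Fin (n + 1)), m (A.act g i) = m i) (N : ℕ) (hh : Fin N → PSpace m)
    (z : Fin N × G) : PSpace m :=
  Real.sqrt (((Fintype.card G : ℝ) * (nKc A z.2 : ℝ))⁻¹) • rename (permVar A hm z.2) (hh z.1)

end Statement10Aux2

section Statement10Aux3

variable {n : ℕ} {Ω : Finset (Fin (n + 1)) → ℕ} {G : Type} [Group G] [Fintype G]

lemma shift_BB {A : GAct Ω G} (hfree : A.Free) {m : Fin (n + 1) → ℕ} (N : ℕ)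
    (hh : Fin N → PSpace m) (g : G) (i : Fin (n + 1)) (c : IdxI G N hh) :
    A.shift g i (restr (BB A N hh c) i) =
      restr (BB A N hh ((c.1.1, g * c.1.2), c.2)) (A.act g i) := by
  funext F
  show BB A N hh c (A.actF g⁻¹ F.1) = BB A N hh ((c.1.1, g * c.1.2), c.2) F.1
  unfold BB
  apply congrArg (eIdx G N hh)
  have h1 : gammaF A (A.actF g⁻¹ F.1) = g⁻¹ * gammaF A F.1 := by
    have := gammaF_mul hfree g⁻¹ F.1
    exact this
  rw [h1, mul_inv_rev, inv_inv, mul_assoc]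

lemma shift_inj (A : GAct Ω G) (g : G) (i : Fin (n + 1)) {r' : ℕ}
    {β β' : MFi Ω i → Fin r'} (hs : A.shift g i β = A.shift g i β') : β = β' := by
  funext F
  have hFmem : A.act g i ∈ (A.actF g F.1).1.1 := by
    rw [A.collapse]
    exact Finset.mem_image.2 ⟨i, F.2, rfl⟩
  have h1 := congrFun hs ⟨A.actF g F.1, hFmem⟩
  calc β F = β ⟨A.actF g⁻¹ (A.actF g F.1),
        A.mem_shift g i ⟨A.actF g F.1, hFmem⟩⟩ :=
        (congrArg β (Subtype.ext (actF_inv_apply A g F.1))).symm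
    _ = β' ⟨A.actF g⁻¹ (A.actF g F.1), A.mem_shift g i ⟨A.actF g F.1, hFmem⟩⟩ := h1
    _ = β' F := congrArg β' (Subtype.ext (actF_inv_apply A g F.1))

lemma BB_inj_pt (A : GAct Ω G) {m : Fin (n + 1) → ℕ} (N : ℕ) (hh : Fin N → PSpace m)
    {c c' : IdxI G N hh} (F : MultiFacet Ω)
    (hcc : BB A N hh c F = BB A N hh c' F) : c = c' := by
  unfold BB at hcc
  have h1 := (eIdx G N hh).injective hcc
  obtain ⟨⟨t, g⟩, d⟩ := c
  obtain ⟨⟨t', g'⟩, d'⟩ := c'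
  simp only [Prod.mk.injEq] at h1
  obtain ⟨⟨ht, hg⟩, hd⟩ := h1
  have hgg : g = g' := mul_left_cancel hg
  simp_all

lemma alpha_classify (hΩ : IsWSC Ω) (hconn : Conn Ω) (A : GAct Ω G)
    {m : Fin (n + 1) → ℕ} (N : ℕ) (hh : Fin N → PSpace m)
    (α : MultiFacet Ω → Fin (rI G N hh))
    (hc : ∀ i : Fin (n + 1), ∃ c : IdxI G N hh, restr (BB A N hh c) i = restr α i) :
    ∃ c, BB A N hh c = α := by
  choose cf hcf using hc
  have key : ∀ j j' : Fin (n + 1),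
      Relation.ReflTransGen
        (fun a b => ∃ F : Finset (Fin (n + 1)), IsFacet Ω F ∧ a ∈ F ∧ b ∈ F) j j' →
      cf j = cf j' := by
    intro j j' hrel
    induction hrel with
    | refl => rfl
    | @tail b c' _ hfac ih =>
      obtain ⟨F, hF, hbF, hcF⟩ := hfac
      have hFne : Ω F ≠ 0 := hF.1
      set Ft : MultiFacet Ω := ⟨⟨F, hF⟩, ⟨0, Nat.pos_of_ne_zero hFne⟩⟩ with hFt
      have h1 : BB A N hh (cf b) Ft = α Ft := congrFun (hcf b) ⟨Ft, hbF⟩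
      have h2 : BB A N hh (cf c') Ft = α Ft := congrFun (hcf c') ⟨Ft, hcF⟩
      exact ih.trans (BB_inj_pt A N hh Ft (h1.trans h2.symm))
  refine ⟨cf 0, funext fun F => ?_⟩
  obtain ⟨i0, hi0⟩ := facet_nonempty hΩ F.1.2
  rw [key 0 i0 (hconn 0 i0)]
  exact congrFun (hcf i0) ⟨F, hi0⟩

lemma qD_at_BB (hΩ : IsWSC Ω) (A : GAct Ω G) {m : Fin (n + 1) → ℕ}
    (hm : ∀ (g : G) (i : Fin (n + 1)), m (A.act g i) = m i) (N : ℕ)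
    (hh : Fin N → PSpace m) (c : IdxI G N hh) (i : Fin (n + 1)) (kk : Fin (N * (n + 1))) :
    qD A hm N hh i kk (restr (BB A N hh c) i) =
      if eKD n N kk = (c.1.1, A.act c.1.2⁻¹ i) then locP A hm N hh c i else 0 := by
  unfold qD
  refine (Finset.sum_eq_single c ?_ ?_).trans ?_
  · intro c' _ hne
    rw [if_neg]
    rintro ⟨h1, -⟩
    obtain ⟨F⟩ := mfi_nonempty hΩ i
    exact hne (BB_inj_pt A N hh F.1 (congrFun h1 F))
  · intro hcon
    exact absurd (Finset.mem_univ c) hcon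
  · have hiff : (restr (BB A N hh c) i = restr (BB A N hh c) i ∧
        eKD n N kk = (c.1.1, A.act c.1.2⁻¹ i)) ↔
        (eKD n N kk = (c.1.1, A.act c.1.2⁻¹ i)) := by simp
    rw [if_congr hiff rfl rfl]

lemma prod_smul_emb {m : Fin (n + 1) → ℕ} (w : Fin (n + 1) → ℝ) (v : ∀ i, LSpace m i) :
    (∏ i, emb m i (w i • v i)) = (∏ i, w i) • ∏ i, emb m i (v i) := by
  calc ∏ i, emb m i (w i • v i) = ∏ i, ((C (w i) : PSpace m) * emb m i (v i)) := by
        refine Finset.prod_congr rfl fun i _ => ?_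
        rw [map_smul, smul_eq_C_mul]
    _ = (∏ i, (C (w i) : PSpace m)) * ∏ i, emb m i (v i) := Finset.prod_mul_distrib
    _ = (∏ i, w i) • ∏ i, emb m i (v i) := by
        rw [← map_prod, ← smul_eq_C_mul]

end Statement10Aux3

section Statement10Aux4

set_option linter.unusedSectionVars false

variable {n : ℕ} {Ω : Finset (Fin (n + 1)) → ℕ} {G : Type} [Group G] [Fintype G]

lemma qD_equiv {A : GAct Ω G} (hfree : A.Free) {m : Fin (n + 1) → ℕ}
    (hm : ∀ (g : G) (i : Fin (n + 1)), m (A.act g i) = m i) (N : ℕ)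
    (hh : Fin N → PSpace m) (g : G) (i : Fin (n + 1)) (kk : Fin (N * (n + 1)))
    (β : MFi Ω i → Fin (rI G N hh)) :
    rename (Fin.cast (hm g i)) (qD A hm N hh (A.act g i) kk (A.shift g i β)) =
      qD A hm N hh i kk β := by
  unfold qD
  rw [map_sum]
  let eg : IdxI G N hh ≃ IdxI G N hh :=
    (Equiv.prodCongr (Equiv.prodCongr (Equiv.refl (Fin N)) (Equiv.mulLeft g))
      (Equiv.refl (DsubD N hh)))
  rw [← Equiv.sum_comp eg (fun c : IdxI G N hh =>
      rename (Fin.cast (hm g i))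
        (if restr (BB A N hh c) (A.act g i) = A.shift g i β ∧
            eKD n N kk = (c.1.1, A.act c.1.2⁻¹ (A.act g i))
          then locP A hm N hh c (A.act g i) else 0))]
  refine Finset.sum_congr rfl fun c _ => ?_
  have hegc : eg c = ((c.1.1, g * c.1.2), c.2) := rfl
  rw [hegc]
  have hact : A.act (g * c.1.2)⁻¹ (A.act g i) = A.act c.1.2⁻¹ i := by
    rw [mul_inv_rev, act_mul_apply, act_inv_apply]
  have hcond : (restr (BB A N hh ((c.1.1, g * c.1.2), c.2)) (A.act g i) = A.shift g i β) ↔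
      (restr (BB A N hh c) i = β) := by
    rw [← shift_BB hfree]
    exact ⟨fun h => shift_inj A g i h, fun h => congrArg _ h⟩
  have hc2 : (eKD n N kk = (((c.1.1, g * c.1.2), c.2).1.1,
      A.act ((c.1.1, g * c.1.2), c.2).1.2⁻¹ (A.act g i))) ↔
      (eKD n N kk = (c.1.1, A.act c.1.2⁻¹ i)) := by
    show (eKD n N kk = (c.1.1, A.act (g * c.1.2)⁻¹ (A.act g i))) ↔ _
    rw [hact]
  rw [if_congr (and_congr hcond hc2) rfl rfl]
  rw [apply_ite (rename (Fin.cast (hm g i))), map_zero]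
  by_cases h : restr (BB A N hh c) i = β ∧ eKD n N kk = (c.1.1, A.act c.1.2⁻¹ i)
  · rw [if_pos h, if_pos h]
    unfold locP
    rw [map_smul]
    have hW : WcD A N hh ((c.1.1, g * c.1.2), c.2) = WcD A N hh c := by
      unfold WcD
      show Real.sqrt (((Fintype.card G : ℝ) * (nKc A (g * c.1.2) : ℝ))⁻¹) *
          coeff c.2.1 (hh c.1.1) = _
      rw [nKc_mul_left]
    have hifw : (if A.act ((c.1.1, g * c.1.2), c.2).1.2⁻¹ (A.act g i) = 0
        then WcD A N hh ((c.1.1, g * c.1.2), c.2) else 1) =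
        (if A.act c.1.2⁻¹ i = 0 then WcD A N hh c else 1) := by
      show (if A.act (g * c.1.2)⁻¹ (A.act g i) = 0 then _ else 1) = _
      rw [hact, hW]
    rw [hifw]
    congr 1
    have hcomp : (permVar A hm g ∘ permVar A hm c.1.2) = permVar A hm (g * c.1.2) :=
      funext fun v => permVar_mul A hm g c.1.2 v
    have hren : rename (permVar A hm ((c.1.1, g * c.1.2), c.2).1.2)
        (monomial (((c.1.1, g * c.1.2), c.2) : IdxI G N hh).2.1 (1:ℝ)) =
        rename (permVar A hm g) (rename (permVar A hm c.1.2) (monomial c.2.1 1)) := by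
      rw [rename_rename, hcomp]
    rw [hren, projB_rename]
  · rw [if_neg h, if_neg h]

end Statement10Aux4

section Statement10Aux5

set_option linter.unusedSectionVars false

variable {n : ℕ} {Ω : Finset (Fin (n + 1)) → ℕ} {G : Type} [Group G] [Fintype G]

lemma sum_monomial_Dsub {m : Fin (n + 1) → ℕ} (N : ℕ) (hh : Fin N → PSpace m) (t : Fin N) :
    (∑ d : DsubD N hh, (monomial d.1 (coeff d.1 (hh t)) : PSpace m)) = hh t := by
  calc ∑ d : DsubD N hh, (monomial d.1 (coeff d.1 (hh t)) : PSpace m)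
      = ∑ d ∈ DsupD N hh, (monomial d (coeff d (hh t)) : PSpace m) :=
        Finset.sum_coe_sort (DsupD N hh) (fun d => (monomial d (coeff d (hh t)) : PSpace m))
    _ = ∑ d ∈ (hh t).support, (monomial d (coeff d (hh t)) : PSpace m) := by
        refine (Finset.sum_subset ?_ ?_).symm
        · intro d hd
          exact Finset.mem_biUnion.2 ⟨t, Finset.mem_univ _, hd⟩
        · intro d _ hd
          rw [notMem_support_iff.mp hd, monomial_zero]
    _ = hh t := support_sum_monomial_coeff _

lemma sum_d_eq (A : GAct Ω G) {m : Fin (n + 1) → ℕ}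
    (hm : ∀ (g : G) (i : Fin (n + 1)), m (A.act g i) = m i) (N : ℕ)
    (hh : Fin N → PSpace m) (z : Fin N × G) :
    (∑ d : DsubD N hh,
      WcD A N hh (z, d) • rename (permVar A hm z.2) (monomial d.1 (1:ℝ))) =
    uD A hm N hh z := by
  have h1 : ∀ d : DsubD N hh,
      WcD A N hh (z, d) • rename (permVar A hm z.2) (monomial d.1 (1:ℝ)) =
      Real.sqrt (((Fintype.card G : ℝ) * (nKc A z.2 : ℝ))⁻¹) •
        rename (permVar A hm z.2) (monomial d.1 (coeff d.1 (hh z.1))) := by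
    intro d
    show (Real.sqrt (((Fintype.card G : ℝ) * (nKc A z.2 : ℝ))⁻¹) * coeff d.1 (hh z.1)) •
        rename (permVar A hm z.2) (monomial d.1 (1:ℝ)) = _
    rw [mul_smul]
    refine congrArg _ ?_
    rw [← map_smul, smul_monomial, smul_eq_mul, mul_one]
  rw [Finset.sum_congr rfl fun d _ => h1 d, ← Finset.smul_sum]
  refine congrArg _ ?_
  exact (map_sum (rename (permVar A hm z.2) : PSpace m →ₐ[ℝ] PSpace m)
      (fun d : DsubD N hh => (monomial d.1 (coeff d.1 (hh z.1)) : PSpace m))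
      Finset.univ).symm.trans (congrArg _ (sum_monomial_Dsub N hh z.1))

end Statement10Aux5

section Statement10Aux5

set_option linter.unusedSectionVars false
set_option maxHeartbeats 2000000

variable {n : ℕ} {Ω : Finset (Fin (n + 1)) → ℕ} {G : Type} [Group G] [Fintype G]

lemma Pk_eq (hΩ : IsWSC Ω) (hconn : Conn Ω) (A : GAct Ω G) {m : Fin (n + 1) → ℕ}
    (hm : ∀ (g : G) (i : Fin (n + 1)), m (A.act g i) = m i) (N : ℕ)
    (hh : Fin N → PSpace m) (k : Fin (n + 1) → Fin (N * (n + 1))) :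
    (∑ α : MultiFacet Ω → Fin (rI G N hh), ∏ i : Fin (n + 1),
      emb m i (qD A hm N hh i (k i) (restr α i))) =
    ∑ z : Fin N × G, if kmapD A N z = k then uD A hm N hh z else 0 := by
  classical
  -- Step 1: restrict to labelings in the image of BB
  have hne : ∀ α ∈ (Finset.univ : Finset (MultiFacet Ω → Fin (rI G N hh))),
      (∏ i : Fin (n + 1), emb m i (qD A hm N hh i (k i) (restr α i))) ≠ 0 →
      (∃ c : IdxI G N hh, BB A N hh c = α) := by
    intro α _ hfα
    by_contra hnex
    have hex : ∃ i0, ∀ c : IdxI G N hh, restr (BB A N hh c) i0 ≠ restr α i0 := by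
      by_contra hno
      push_neg at hno
      exact hnex (alpha_classify hΩ hconn A N hh α hno)
    obtain ⟨i0, hi0⟩ := hex
    apply hfα
    refine Finset.prod_eq_zero (Finset.mem_univ i0) ?_
    have hq0 : qD A hm N hh i0 (k i0) (restr α i0) = 0 := by
      unfold qD
      refine Finset.sum_eq_zero fun c _ => ?_
      rw [if_neg]
      rintro ⟨h1, -⟩
      exact hi0 c h1
    rw [hq0, map_zero]
  have himg : (Finset.univ : Finset (MultiFacet Ω → Fin (rI G N hh))).filter
      (fun α => ∃ c : IdxI G N hh, BB A N hh c = α) =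
      Finset.univ.image (BB A N hh) := by
    ext α
    simp [Finset.mem_image, Finset.mem_filter]
  have hBinj : ∀ c ∈ (Finset.univ : Finset (IdxI G N hh)),
      ∀ c' ∈ (Finset.univ : Finset (IdxI G N hh)),
      BB A N hh c = BB A N hh c' → c = c' := by
    intro c _ c' _ hcc
    exact BB_inj_pt A N hh (mf_nonempty hΩ).some (congrFun hcc _)
  have step1 : (∑ α : MultiFacet Ω → Fin (rI G N hh), ∏ i : Fin (n + 1),
      emb m i (qD A hm N hh i (k i) (restr α i))) =
      ∑ c : IdxI G N hh, ∏ i : Fin (n + 1),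
        emb m i (qD A hm N hh i (k i) (restr (BB A N hh c) i)) := by
    rw [← Finset.sum_filter_of_ne hne, himg, Finset.sum_image hBinj]
  rw [step1]
  -- Step 2: compute the product for each coherent labeling
  have step2 : ∀ c : IdxI G N hh,
      (∏ i : Fin (n + 1), emb m i (qD A hm N hh i (k i) (restr (BB A N hh c) i))) =
      if kmapD A N c.1 = k
      then WcD A N hh c • rename (permVar A hm c.1.2) (monomial c.2.1 (1:ℝ)) else 0 := by
    intro c
    by_cases hk : kmapD A N c.1 = k
    · have hcond : ∀ i, eKD n N (k i) = (c.1.1, A.act c.1.2⁻¹ i) := by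
        intro i
        have h1 := congrFun hk i
        rw [← h1]
        exact Equiv.apply_symm_apply _ _
      rw [if_pos hk]
      calc ∏ i : Fin (n + 1), emb m i (qD A hm N hh i (k i) (restr (BB A N hh c) i))
          = ∏ i : Fin (n + 1), emb m i
              ((if A.act c.1.2⁻¹ i = 0 then WcD A N hh c else 1) •
                projB i (rename (permVar A hm c.1.2) (monomial c.2.1 1))) := by
            refine Finset.prod_congr rfl fun i _ => ?_
            rw [qD_at_BB hΩ A hm N hh c i (k i), if_pos (hcond i)]
            rfl
        _ = (∏ i : Fin (n + 1), (if A.act c.1.2⁻¹ i = 0 then WcD A N hh c else 1)) •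
            ∏ i : Fin (n + 1),
              emb m i (projB i (rename (permVar A hm c.1.2) (monomial c.2.1 1))) :=
            prod_smul_emb _ _
        _ = WcD A N hh c • rename (permVar A hm c.1.2) (monomial c.2.1 (1:ℝ)) := by
            have hw : (∏ i : Fin (n + 1),
                (if A.act c.1.2⁻¹ i = 0 then WcD A N hh c else 1)) = WcD A N hh c := by
              have h1 : ∀ i : Fin (n + 1),
                  (A.act c.1.2⁻¹ i = 0) ↔ (i = A.act c.1.2 0) := by
                intro i
                constructor
                · intro hx
                  rw [← hx, act_apply_inv]
                · intro hx
                  rw [hx, act_inv_apply]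
              calc ∏ i : Fin (n + 1), (if A.act c.1.2⁻¹ i = 0 then WcD A N hh c else 1)
                  = ∏ i : Fin (n + 1), (if i = A.act c.1.2 0 then WcD A N hh c else 1) :=
                    Finset.prod_congr rfl fun i _ => if_congr (h1 i) rfl rfl
                _ = WcD A N hh c := by
                    rw [Finset.prod_ite_eq' Finset.univ (A.act c.1.2 0)
                      (fun _ => WcD A N hh c)]
                    simp
            have hv : (∏ i : Fin (n + 1),
                emb m i (projB i (rename (permVar A hm c.1.2) (monomial c.2.1 (1:ℝ))))) =
                rename (permVar A hm c.1.2) (monomial c.2.1 (1:ℝ)) := by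
              rw [rename_monomial]
              exact fact_monomial _
            rw [hw, hv]
    · rw [if_neg hk]
      have hex : ∃ i0, ¬ (eKD n N (k i0) = (c.1.1, A.act c.1.2⁻¹ i0)) := by
        by_contra hno
        push_neg at hno
        apply hk
        funext i
        show (eKD n N).symm (c.1.1, A.act c.1.2⁻¹ i) = k i
        rw [← hno i, Equiv.symm_apply_apply]
      obtain ⟨i0, hi0⟩ := hex
      refine Finset.prod_eq_zero (Finset.mem_univ i0) ?_
      rw [qD_at_BB hΩ A hm N hh c i0 (k i0), if_neg hi0, map_zero]
  rw [Finset.sum_congr rfl fun c _ => step2 c]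
  -- Step 3: sum over the index set
  rw [Fintype.sum_prod_type]
  refine Finset.sum_congr rfl fun z _ => ?_
  by_cases hz : kmapD A N z = k
  · rw [if_pos hz]
    have h1 : ∀ d : DsubD N hh,
        (if kmapD A N ((z, d) : IdxI G N hh).1 = k
          then WcD A N hh (z, d) • rename (permVar A hm ((z, d) : IdxI G N hh).1.2)
            (monomial ((z, d) : IdxI G N hh).2.1 (1:ℝ)) else 0) =
        WcD A N hh (z, d) • rename (permVar A hm z.2) (monomial d.1 (1:ℝ)) :=
      fun d => if_pos hz
    rw [Finset.sum_congr rfl fun d _ => h1 d]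
    exact sum_d_eq A hm N hh z
  · rw [if_neg hz]
    refine Finset.sum_eq_zero fun d _ => ?_
    rw [if_neg]
    exact hz

end Statement10Aux5

section Statement10Aux6

set_option linter.unusedSectionVars false

variable {n : ℕ} {Ω : Finset (Fin (n + 1)) → ℕ} {G : Type} [Group G] [Fintype G]

lemma kmapD_eq_iff (A : GAct Ω G) (N : ℕ) (z z' : Fin N × G) :
    kmapD A N z' = kmapD A N z ↔ (z'.1 = z.1 ∧ ∀ i, A.act z'.2 i = A.act z.2 i) := by
  constructor
  · intro hzz
    have h1 : ∀ i : Fin (n + 1), z'.1 = z.1 ∧ A.act z'.2⁻¹ i = A.act z.2⁻¹ i := by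
      intro i
      have h2 := (eKD n N).symm.injective (congrFun hzz i)
      exact ⟨(Prod.ext_iff.mp h2).1, (Prod.ext_iff.mp h2).2⟩
    refine ⟨(h1 0).1, fun i => ?_⟩
    have h3 := (h1 (A.act z'.2 i)).2
    rw [act_inv_apply] at h3
    have h4 := congrArg (A.act z.2) h3
    rw [act_apply_inv] at h4
    exact h4.symm
  · rintro ⟨h1, h2⟩
    funext i
    have h3 : A.act z'.2⁻¹ i = A.act z.2⁻¹ i := by
      have h4 := h2 (A.act z.2⁻¹ i)
      rw [act_apply_inv] at h4
      calc A.act z'.2⁻¹ i = A.act z'.2⁻¹ (A.act z'.2 (A.act z.2⁻¹ i)) := by rw [h4]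
        _ = A.act z.2⁻¹ i := act_inv_apply A z'.2 _
    show (eKD n N).symm (z'.1, A.act z'.2⁻¹ i) = (eKD n N).symm (z.1, A.act z.2⁻¹ i)
    rw [h1, h3]

lemma kmap_fiber_card (A : GAct Ω G) (N : ℕ) (z : Fin N × G) :
    (Finset.univ.filter fun z' : Fin N × G => kmapD A N z' = kmapD A N z).card =
      nKc A z.2 := by
  unfold nKc
  apply Finset.card_bij (fun (a : Fin N × G) _ => a.2)
  · intro a ha
    simp only [Finset.mem_filter, Finset.mem_univ, true_and] at ha ⊢
    exact ((kmapD_eq_iff A N z a).mp ha).2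
  · intro a ha b hb hab
    simp only [Finset.mem_filter, Finset.mem_univ, true_and] at ha hb
    have h1 := ((kmapD_eq_iff A N z a).mp ha).1
    have h2 := ((kmapD_eq_iff A N z b).mp hb).1
    exact Prod.ext (h1.trans h2.symm) hab
  · intro g₁ hg₁
    simp only [Finset.mem_filter, Finset.mem_univ, true_and] at hg₁ ⊢
    exact ⟨(z.1, g₁), (kmapD_eq_iff A N z (z.1, g₁)).mpr ⟨rfl, hg₁⟩, rfl⟩

lemma uD_fiber_const (A : GAct Ω G) {m : Fin (n + 1) → ℕ}
    (hm : ∀ (g : G) (i : Fin (n + 1)), m (A.act g i) = m i) (N : ℕ)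
    (hh : Fin N → PSpace m) {z z' : Fin N × G} (hzz : kmapD A N z' = kmapD A N z) :
    uD A hm N hh z' = uD A hm N hh z := by
  obtain ⟨h1, h2⟩ := (kmapD_eq_iff A N z z').mp hzz
  unfold uD
  rw [h1, permVar_congr A hm h2, nKc_congr A h2]

lemma total_eq (A : GAct Ω G) {m : Fin (n + 1) → ℕ}
    (hm : ∀ (g : G) (i : Fin (n + 1)), m (A.act g i) = m i) (N : ℕ)
    (hh : Fin N → PSpace m) (p : PSpace m) (hp : p = ∑ t : Fin N, hh t ^ 2)
    (hinv : GInvPoly A hm p) :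
    (∑ k : Fin (n + 1) → Fin (N * (n + 1)),
      (∑ z : Fin N × G, if kmapD A N z = k then uD A hm N hh z else 0) ^ 2) = p := by
  classical
  have hH : (Fintype.card G : ℝ) ≠ 0 := Nat.cast_ne_zero.2 Fintype.card_ne_zero
  calc ∑ k : Fin (n + 1) → Fin (N * (n + 1)),
        (∑ z : Fin N × G, if kmapD A N z = k then uD A hm N hh z else 0) ^ 2
      = ∑ k : Fin (n + 1) → Fin (N * (n + 1)), ∑ z : Fin N × G, ∑ z' : Fin N × G,
          (if kmapD A N z = k then uD A hm N hh z else 0) *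
            (if kmapD A N z' = k then uD A hm N hh z' else 0) := by
        refine Finset.sum_congr rfl fun k _ => ?_
        rw [pow_two, Finset.sum_mul_sum]
    _ = ∑ z : Fin N × G, ∑ z' : Fin N × G, ∑ k : Fin (n + 1) → Fin (N * (n + 1)),
          (if kmapD A N z = k then uD A hm N hh z else 0) *
            (if kmapD A N z' = k then uD A hm N hh z' else 0) := by
        rw [Finset.sum_comm]
        exact Finset.sum_congr rfl fun z _ => Finset.sum_comm
    _ = ∑ z : Fin N × G, ∑ z' : Fin N × G,
          (if kmapD A N z' = kmapD A N z then uD A hm N hh z * uD A hm N hh z' else 0) := by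
        refine Finset.sum_congr rfl fun z _ => Finset.sum_congr rfl fun z' _ => ?_
        by_cases hzz : kmapD A N z' = kmapD A N z
        · rw [if_pos hzz]
          have h1 : ∀ k : Fin (n + 1) → Fin (N * (n + 1)),
              (if kmapD A N z = k then uD A hm N hh z else 0) *
                (if kmapD A N z' = k then uD A hm N hh z' else 0) =
              (if kmapD A N z = k then uD A hm N hh z * uD A hm N hh z' else 0) := by
            intro k
            by_cases hk : kmapD A N z = k
            · rw [if_pos hk, if_pos hk, if_pos (hzz.trans hk)]
            · rw [if_neg hk, if_neg hk, zero_mul]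
          rw [Finset.sum_congr rfl fun k _ => h1 k, Finset.sum_ite_eq Finset.univ]
          simp
        · rw [if_neg hzz]
          refine Finset.sum_eq_zero fun k _ => ?_
          by_cases hk : kmapD A N z = k
          · rw [if_neg (fun hcon : kmapD A N z' = k => hzz (hcon.trans hk.symm)), mul_zero]
          · rw [if_neg hk, zero_mul]
    _ = ∑ z : Fin N × G, (nKc A z.2) • (uD A hm N hh z * uD A hm N hh z) := by
        refine Finset.sum_congr rfl fun z _ => ?_
        rw [← Finset.sum_filter]
        have h1 : ∀ z' ∈ Finset.univ.filter
            (fun z' : Fin N × G => kmapD A N z' = kmapD A N z),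
            uD A hm N hh z * uD A hm N hh z' = uD A hm N hh z * uD A hm N hh z := by
          intro z' hz'
          rw [uD_fiber_const A hm N hh (Finset.mem_filter.mp hz').2]
        rw [Finset.sum_congr rfl h1, Finset.sum_const, kmap_fiber_card]
    _ = ∑ z : Fin N × G, (Fintype.card G : ℝ)⁻¹ •
          (rename (permVar A hm z.2) (hh z.1) * rename (permVar A hm z.2) (hh z.1)) := by
        refine Finset.sum_congr rfl fun z _ => ?_
        have hnk : (nKc A z.2 : ℝ) ≠ 0 := Nat.cast_ne_zero.2 (nKc_pos A z.2).ne'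
        have harg : (0 : ℝ) ≤ ((Fintype.card G : ℝ) * (nKc A z.2 : ℝ))⁻¹ := by positivity
        rw [← Nat.cast_smul_eq_nsmul ℝ]
        unfold uD
        rw [smul_mul_assoc, mul_smul_comm, smul_smul, smul_smul]
        congr 1
        rw [mul_assoc, Real.mul_self_sqrt harg]
        field_simp
    _ = (Fintype.card G : ℝ)⁻¹ • ∑ g : G, rename (permVar A hm g) p := by
        rw [← Finset.smul_sum]
        congr 1
        rw [Fintype.sum_prod_type, Finset.sum_comm]
        refine Finset.sum_congr rfl fun g _ => ?_
        rw [hp, map_sum]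
        refine Finset.sum_congr rfl fun t _ => ?_
        rw [pow_two, map_mul]
    _ = p := by
        have h2 : ∀ g ∈ (Finset.univ : Finset G),
            rename (permVar A hm g) p = p := fun g _ => hinv g
        rw [Finset.sum_congr rfl h2, Finset.sum_const, Finset.card_univ,
          ← Nat.cast_smul_eq_nsmul ℝ, smul_smul, inv_mul_cancel₀ hH, one_smul]

end Statement10Aux6

/-- existence of sos `(Ω,G)`-decompositions for free group actions. -/
theorem statement10 {n : ℕ} {Ω : Finset (Fin (n + 1)) → ℕ} (hΩ : IsWSC Ω) (hconn : Conn Ω)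
    {G : Type} [Group G] [Fintype G] (A : GAct Ω G) (hfree : A.Free)
    {m : Fin (n + 1) → ℕ} (hm : ∀ (g : G) (i : Fin (n + 1)), m (A.act g i) = m i)
    (p : PSpace m) (hsos : IsSos p) (hinv : GInvPoly A hm p) :
    SosOGRank A hm p < ⊤ := by
  classical
  obtain ⟨N, h, hp⟩ := hsos
  have hdec : HasSosOGDec A hm p (rI G N h) := by
    refine ⟨fun _ => N * (n + 1), fun _ _ => rfl,
      fun i kk β => qD A hm N h i kk β, ?_, ?_⟩
    · calc p = ∑ k : Fin (n + 1) → Fin (N * (n + 1)),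
            (∑ z : Fin N × G, if kmapD A N z = k then uD A hm N h z else 0) ^ 2 :=
            (total_eq A hm N h p hp hinv).symm
        _ = ∑ k : Fin (n + 1) → Fin (N * (n + 1)),
            (∑ α : MultiFacet Ω → Fin (rI G N h), ∏ i : Fin (n + 1),
              emb m i (qD A hm N h i (k i) (restr α i))) ^ 2 := by
            refine Finset.sum_congr rfl fun k _ => ?_
            rw [Pk_eq hΩ hconn A hm N h k]
    · intro g i kk β
      exact qD_equiv hfree hm N h g i kk β
  refine lt_of_le_of_lt (iInf_le _ (⟨rI G N h, hdec⟩ :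
    {r : ℕ // HasSosOGDec A hm p r})) ?_
  exact WithTop.coe_lt_top _


end
end PolyDec
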